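/- arXiv:1304.4480 — 3 statements merged into one kernel-verified Lean document; each statement's English description precedes it below -/
import Mathlib

section
/- Let k ≥ 0 and let Z be a unitriangular block matrix over ZMod 2 that vanishes on its d-th upper diagonal for all 1 ≤ d ≤ k. Then the square S = Z*Z is unitriangular, S vanishes on its d-th upper diagonal for all 1 ≤ d ≤ 2k+1, and for every i ∈ ℕ: S i (i+2k+2) = Z i (i+k+1) * Z (i+k+1) (i+2k+2), and S i (i+2k+3) = Z i (i+k+1) * Z (i+k+1) (i+2k+3) + Z i (i+k+2) * Z (i+k+2) (i+2k+3). -/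
/-- A 3×3 block over `ZMod 2`. -/
abbrev Blk := Matrix (Fin 3) (Fin 3) (ZMod 2)

/-- A block matrix: an ℕ×ℕ array of 3×3 blocks over `ZMod 2`. -/
abbrev BlockMat := ℕ → ℕ → Blk

/-- `Z` is unitriangular. -/
def Unitri (Z : BlockMat) : Prop :=
  (∀ i, Z i i = 1) ∧ ∀ i j, j < i → Z i j = 0

/-- The product of block matrices. -/
def bmul (Z W : BlockMat) : BlockMat := fun i j =>
  if i ≤ j then ∑ l ∈ Finset.Icc i j, Z i l * W l j else 0

/-- The identity block matrix. -/
def bone : BlockMat := fun i j => if i = j then 1 else 0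

/-- `Z` vanishes on its `d`-th upper diagonal. -/
def VanishDiag (Z : BlockMat) (d : ℕ) : Prop := ∀ i, Z i (i + d) = 0

lemma bmul_diag (Z : BlockMat) (i d : ℕ) :
    bmul Z Z i (i + d) = ∑ m ∈ Finset.range (d+1), Z i (i+m) * Z (i+m) (i+d) := by
  unfold bmul
  rw [if_pos (Nat.le_add_right i d), ← Finset.Ico_add_one_right_eq_Icc, Finset.sum_Ico_eq_sum_range]
  have h : i + d + 1 - i = d + 1 := by omega
  rw [h]

lemma mid (Z : BlockMat) (k : ℕ) (hZv : ∀ d, 1 ≤ d → d ≤ k → VanishDiag Z d)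
    (i d m : ℕ) (h1 : 1 ≤ m) (h2 : m < d) (h3 : m ≤ k ∨ d ≤ m + k) :
    Z i (i+m) * Z (i+m) (i+d) = 0 := by
  rcases h3 with h | h
  · rw [hZv m h1 h i, zero_mul]
  · have he : i + d = (i + m) + (d - m) := by omega
    rw [he, hZv (d-m) (by omega) (by omega), mul_zero]


/-- the square of a unitriangular block matrix vanishing on its
first `k` upper diagonals vanishes on its first `2k+1` upper diagonals, with
explicit formulas for the next two diagonals. -/
theorem statement1 (Z : BlockMat) (k : ℕ) (hZ : Unitri Z)
    (hZv : ∀ d, 1 ≤ d → d ≤ k → VanishDiag Z d) :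
    Unitri (bmul Z Z) ∧
    (∀ d, 1 ≤ d → d ≤ 2 * k + 1 → VanishDiag (bmul Z Z) d) ∧
    (∀ i : ℕ,
      bmul Z Z i (i + (2 * k + 2)) =
        Z i (i + (k + 1)) * Z (i + (k + 1)) (i + (2 * k + 2)) ∧
      bmul Z Z i (i + (2 * k + 3)) =
        Z i (i + (k + 1)) * Z (i + (k + 1)) (i + (2 * k + 3)) +
          Z i (i + (k + 2)) * Z (i + (k + 2)) (i + (2 * k + 3))) := by
  obtain ⟨h1, h0⟩ := hZ
  have x2 : ∀ x : Blk, x + x = 0 := fun x => by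
    ext a b
    simp only [Matrix.add_apply, Matrix.zero_apply]
    exact CharTwo.add_self_eq_zero _
  refine ⟨⟨fun i => ?_, fun i j h => ?_⟩, fun d hd1 hd2 i => ?_, fun i => ⟨?_, ?_⟩⟩
  · simp [bmul, h1]
  · simp [bmul, Nat.not_le.mpr h]
  · rw [bmul_diag]
    have hsub : ({0, d} : Finset ℕ) ⊆ Finset.range (d+1) := by
      intro m hm; simp at hm; simp; omega
    rw [← Finset.sum_subset hsub (by
      intro m hm hns
      simp at hm hns
      exact mid Z k hZv i d m (by omega) (by omega) (by omega))]
    rw [Finset.sum_pair (by omega : (0:ℕ) ≠ d)]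
    simp only [Nat.add_zero, h1, one_mul, mul_one]
    exact x2 _
  · rw [bmul_diag]
    have hsub : ({0, k+1, 2*k+2} : Finset ℕ) ⊆ Finset.range (2*k+2+1) := by
      intro m hm; simp at hm; simp; omega
    rw [← Finset.sum_subset hsub (by
      intro m hm hns
      simp at hm hns
      exact mid Z k hZv i (2*k+2) m (by omega) (by omega) (by omega))]
    rw [Finset.sum_insert (by simp only [Finset.mem_insert, Finset.mem_singleton]; omega), Finset.sum_insert (by simp only [Finset.mem_insert, Finset.mem_singleton]; omega),
      Finset.sum_singleton]
    simp only [Nat.add_zero, h1, one_mul, mul_one]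
    calc Z i (i+(2*k+2)) + (Z i (i+(k+1)) * Z (i+(k+1)) (i+(2*k+2)) + Z i (i+(2*k+2)))
        = (Z i (i+(2*k+2)) + Z i (i+(2*k+2))) + Z i (i+(k+1)) * Z (i+(k+1)) (i+(2*k+2)) := by
          abel
      _ = _ := by rw [x2, zero_add]
  · rw [bmul_diag]
    have hsub : ({0, k+1, k+2, 2*k+3} : Finset ℕ) ⊆ Finset.range (2*k+3+1) := by
      intro m hm; simp at hm; simp; omega
    rw [← Finset.sum_subset hsub (by
      intro m hm hns
      simp at hm hns
      exact mid Z k hZv i (2*k+3) m (by omega) (by omega) (by omega))]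
    rw [Finset.sum_insert (by simp only [Finset.mem_insert, Finset.mem_singleton]; omega), Finset.sum_insert (by simp only [Finset.mem_insert, Finset.mem_singleton]; omega),
      Finset.sum_insert (by simp only [Finset.mem_insert, Finset.mem_singleton]; omega), Finset.sum_singleton]
    simp only [Nat.add_zero, h1, one_mul, mul_one]
    calc Z i (i+(2*k+3)) + (Z i (i+(k+1)) * Z (i+(k+1)) (i+(2*k+3)) +
          (Z i (i+(k+2)) * Z (i+(k+2)) (i+(2*k+3)) + Z i (i+(2*k+3))))
        = (Z i (i+(2*k+3)) + Z i (i+(2*k+3))) +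
          (Z i (i+(k+1)) * Z (i+(k+1)) (i+(2*k+3)) +
           Z i (i+(k+2)) * Z (i+(k+2)) (i+(2*k+3))) := by abel
      _ = _ := by rw [x2, zero_add]
end

section
/- Let k ≥ 0, let Z be a unitriangular block matrix over ZMod 2 that vanishes on its d-th upper diagonal for all 1 ≤ d ≤ k, and let B, C be unitriangular block matrices with C*B equal to the identity block matrix (the unitriangular block matrix vanishing on all upper diagonals). Set P = C*(Z*B). Then P vanishes on its d-th upper diagonal for all 1 ≤ d ≤ k, and for every i ∈ ℕ: P i (i+k+1) = Z i (i+k+1), and P i (i+k+2) = Z i (i+k+2) + B i (i+1) * Z (i+1) (i+k+2) + Z i (i+k+1) * B (i+k+1) (i+k+2). In particular, conjugation by a unitriangular block matrix does not change the leading ((k+1)-st) upper diagonal of Z. -/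
/-!
Write `Z = 1 + N`, where `N` vanishes on and below its `k`-th upper diagonal. Since `C * B = 1`,
`C * (Z * B) = 1 + C * (N * B)`, and in a product one of whose factors vanishes up to the `k`-th
diagonal, the entries on the `(k+1)`-st and `(k+2)`-nd diagonals involve only the diagonal and the
first upper diagonal of the other factor. The first upper diagonal of `C` is `-B i (i+1)`, which
is `B i (i+1)` over `ZMod 2`.
-/

open Finset

theorem bmul_apply_of_le {X W : BlockMat} {i j : ℕ} (h : i ≤ j) :
    bmul X W i j = ∑ l ∈ Icc i j, X i l * W l j := if_pos h

theorem bmul_apply_of_lt {X W : BlockMat} {i j : ℕ} (h : j < i) : bmul X W i j = 0 :=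
  if_neg (by omega)

theorem bmul_add_left (X Y W : BlockMat) : bmul (X + Y) W = bmul X W + bmul Y W := by
  ext i j : 2
  simp only [bmul, Pi.add_apply]
  split_ifs <;> simp [add_mul, sum_add_distrib]

theorem bmul_add_right (X W V : BlockMat) : bmul X (W + V) = bmul X W + bmul X V := by
  ext i j : 2
  simp only [bmul, Pi.add_apply]
  split_ifs <;> simp [mul_add, sum_add_distrib]

theorem bmul_bone_left_of_le (W : BlockMat) {i j : ℕ} (h : i ≤ j) : bmul bone W i j = W i j := by
  rw [bmul_apply_of_le h, sum_eq_single_of_mem i (by simp [h])]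
  · simp [bone]
  · intro l _ hli
    simp [bone, Ne.symm hli]

theorem bmul_congr_right (X : BlockMat) {W V : BlockMat} (h : ∀ i j, i ≤ j → W i j = V i j) :
    bmul X W = bmul X V := by
  ext i j : 2
  unfold bmul
  split_ifs with hij
  · exact sum_congr rfl fun l hl => by rw [h l j (mem_Icc.mp hl).2]
  · rfl

theorem bmul_bmul_bone_left (X W : BlockMat) : bmul X (bmul bone W) = bmul X W :=
  bmul_congr_right X fun _ _ h => bmul_bone_left_of_le W h

theorem apply_succ_of_bmul_eq_bone {B C : BlockMat} (hB : Unitri B) (hC : Unitri C)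
    (hCB : bmul C B = bone) (i : ℕ) : C i (i + 1) = B i (i + 1) := by
  have h := congrFun (congrFun hCB i) (i + 1)
  rw [bmul_apply_of_le (by omega), sum_Icc_succ_top (by omega), Icc_self, sum_singleton,
    hC.1, one_mul, hB.1, mul_one] at h
  exact (CharTwo.add_eq_zero.mp (h.trans (if_neg (by omega)))).symm

section VanishingFactor

variable {N W : BlockMat} {k : ℕ} (hN : ∀ i j, j ≤ i + k → N i j = 0)
include hN

theorem bmul_apply_eq_sum_of_vanish_left (i j : ℕ) :
    bmul N W i j = ∑ l ∈ Icc (i + (k + 1)) j, N i l * W l j := by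
  rcases le_or_gt i j with hij | hij
  · rw [bmul_apply_of_le hij]
    refine (sum_subset (Icc_subset_Icc_left (by omega)) fun l hl hl' => ?_).symm
    simp only [mem_Icc] at hl hl'
    rw [hN i l (by omega), zero_mul]
  · rw [bmul_apply_of_lt hij, Icc_eq_empty (by omega), sum_empty]

theorem bmul_apply_eq_sum_of_vanish_right (i j : ℕ) :
    bmul W N i (j + (k + 1)) = ∑ l ∈ Icc i j, W i l * N l (j + (k + 1)) := by
  rcases le_or_gt i (j + (k + 1)) with hij | hij
  · rw [bmul_apply_of_le hij]
    refine (sum_subset (Icc_subset_Icc_right (by omega)) fun l hl hl' => ?_).symm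
    simp only [mem_Icc] at hl hl'
    rw [hN l _ (by omega), mul_zero]
  · rw [bmul_apply_of_lt hij, Icc_eq_empty (by omega), sum_empty]

theorem bmul_apply_eq_zero_of_vanish_left {i j : ℕ} (h : j ≤ i + k) : bmul N W i j = 0 := by
  rw [bmul_apply_eq_sum_of_vanish_left hN, Icc_eq_empty (by omega), sum_empty]

theorem bmul_apply_eq_zero_of_vanish_right {i j : ℕ} (h : j ≤ i + k) : bmul W N i j = 0 := by
  rcases le_or_gt i j with hij | hij
  · rw [bmul_apply_of_le hij]
    exact sum_eq_zero fun l hl => by rw [hN l j (by simp at hl; omega), mul_zero]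
  · exact bmul_apply_of_lt hij

theorem bmul_apply_add_succ_of_vanish_left (i : ℕ) :
    bmul N W i (i + (k + 1)) = N i (i + (k + 1)) * W (i + (k + 1)) (i + (k + 1)) := by
  rw [bmul_apply_eq_sum_of_vanish_left hN, Icc_self, sum_singleton]

theorem bmul_apply_add_succ_of_vanish_right (i : ℕ) :
    bmul W N i (i + (k + 1)) = W i i * N i (i + (k + 1)) := by
  rw [bmul_apply_eq_sum_of_vanish_right hN, Icc_self, sum_singleton]

theorem bmul_apply_add_two_of_vanish_left (i : ℕ) :
    bmul N W i (i + (k + 2)) = N i (i + (k + 1)) * W (i + (k + 1)) (i + (k + 2)) +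
      N i (i + (k + 2)) * W (i + (k + 2)) (i + (k + 2)) := by
  rw [bmul_apply_eq_sum_of_vanish_left hN, show i + (k + 2) = i + (k + 1) + 1 by omega,
    sum_Icc_succ_top (by omega), Icc_self, sum_singleton]

theorem bmul_apply_add_two_of_vanish_right (i : ℕ) :
    bmul W N i (i + (k + 2)) =
      W i i * N i (i + (k + 2)) + W i (i + 1) * N (i + 1) (i + (k + 2)) := by
  rw [show i + (k + 2) = i + 1 + (k + 1) by omega, bmul_apply_eq_sum_of_vanish_right hN,
    sum_Icc_succ_top (by omega), Icc_self, sum_singleton]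

end VanishingFactor

theorem sub_bone_apply_of_lt (Z : BlockMat) {i j : ℕ} (h : i < j) : (Z - bone) i j = Z i j := by
  simp [bone, h.ne]

theorem Unitri.sub_bone_apply_eq_zero {Z : BlockMat} {k : ℕ} (hZ : Unitri Z)
    (hZv : ∀ d, 1 ≤ d → d ≤ k → VanishDiag Z d) : ∀ i j, j ≤ i + k → (Z - bone) i j = 0 := by
  intro i j hj
  rcases lt_trichotomy j i with hji | rfl | hij
  · simp [hZ.2 i j hji, bone, hji.ne']
  · simp [hZ.1, bone]
  · obtain ⟨d, rfl⟩ := Nat.exists_eq_add_of_lt hij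
    rw [sub_bone_apply_of_lt Z hij]
    exact hZv (d + 1) (by omega) (by omega) i

theorem bmul_bmul_eq_bone_add {Z B C : BlockMat} (hCB : bmul C B = bone) :
    bmul C (bmul Z B) = bone + bmul C (bmul (Z - bone) B) := by
  conv_lhs =>
    rw [← add_sub_cancel bone Z, bmul_add_left, bmul_add_right, bmul_bmul_bone_left, hCB]

/-- conjugation `P = C*(Z*B)` (with `C*B = 1`) of a unitriangular
block matrix `Z` vanishing on its first `k` upper diagonals again vanishes
there, does not change the leading `(k+1)`-st upper diagonal, and changes the
`(k+2)`-nd upper diagonal by the stated explicit formula. -/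
theorem statement2 (Z B C : BlockMat) (k : ℕ)
    (hZ : Unitri Z) (hB : Unitri B) (hC : Unitri C)
    (hCB : bmul C B = bone)
    (hZv : ∀ d, 1 ≤ d → d ≤ k → VanishDiag Z d) :
    (∀ d, 1 ≤ d → d ≤ k → VanishDiag (bmul C (bmul Z B)) d) ∧
    (∀ i : ℕ,
      bmul C (bmul Z B) i (i + (k + 1)) = Z i (i + (k + 1)) ∧
      bmul C (bmul Z B) i (i + (k + 2)) =
        Z i (i + (k + 2)) + B i (i + 1) * Z (i + 1) (i + (k + 2)) +
          Z i (i + (k + 1)) * B (i + (k + 1)) (i + (k + 2))) := by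
  have hN := hZ.sub_bone_apply_eq_zero hZv
  have hNB : ∀ i j, j ≤ i + k → bmul (Z - bone) B i j = 0 :=
    fun _ _ => bmul_apply_eq_zero_of_vanish_left hN
  have hbone : ∀ {i j}, i < j → bone i j = 0 := fun h => if_neg h.ne
  rw [bmul_bmul_eq_bone_add hCB]
  simp only [VanishDiag, Pi.add_apply]
  refine ⟨fun d hd1 hdk i => ?_, fun i => ⟨?_, ?_⟩⟩
  · rw [hbone (show i < i + d by omega),
      bmul_apply_eq_zero_of_vanish_right hNB (show i + d ≤ i + k by omega), add_zero]
  · rw [hbone (show i < i + (k + 1) by omega), zero_add, bmul_apply_add_succ_of_vanish_right hNB,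
      bmul_apply_add_succ_of_vanish_left hN, hB.1, hC.1, one_mul, mul_one,
      sub_bone_apply_of_lt Z (show i < i + (k + 1) by omega)]
  · have e : i + (k + 2) = i + 1 + (k + 1) := by omega
    rw [hbone (show i < i + (k + 2) by omega), zero_add, bmul_apply_add_two_of_vanish_right hNB,
      bmul_apply_add_two_of_vanish_left hN, e, bmul_apply_add_succ_of_vanish_left hN, ← e,
      apply_succ_of_bmul_eq_bone hB hC hCB, hC.1, hB.1,
      sub_bone_apply_of_lt Z (show i < i + (k + 1) by omega),
      sub_bone_apply_of_lt Z (show i < i + (k + 2) by omega),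
      sub_bone_apply_of_lt Z (show i + 1 < i + (k + 2) by omega)]
    simp only [one_mul, mul_one]
    abel
end

section
/- Let α be a type, let R ⊆ FreeGroup α be a set of relators, and let Γ = PresentedGroup R; assume Γ is a finite group. Let w : α → FreeGroup α, let φ : FreeGroup α →* FreeGroup α be the homomorphism with φ(of a) = w a for every a ∈ α (φ = FreeGroup.lift w), and let Γ' = PresentedGroup (R ∪ φ '' R). Writing ⟦·⟧ for the canonical projection FreeGroup α → Γ, the following are equivalent: (i) there exists a group homomorphism ψ : Γ → Γ with ψ(⟦of a⟧) = ⟦w a⟧ for every a ∈ α; (ii) Nat.card Γ = Nat.card Γ'. Moreover, if such a homomorphism ψ exists, it is unique. -/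
/-!
Both conditions say that the relators `φ r`, `r ∈ R`, already vanish in `Γ`. For (i) this is
the universal property of `Γ`, since `r ↦ ψ ⟦r⟧` and `r ↦ ⟦φ r⟧` agree on generators. For (ii),
`Γ'` is the quotient of `Γ` by the normal closure of their images; a surjection between finite
groups of equal order is injective. Uniqueness holds because the `⟦of a⟧` generate `Γ`.
-/

namespace PresentedGroup

variable {α : Type*}

theorem exists_hom_iff {G : Type*} [Group G] (R : Set (FreeGroup α)) (f : α → G) :
    (∃ ψ : PresentedGroup R →* G, ∀ a, ψ (mk R (FreeGroup.of a)) = f a) ↔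
      ∀ r ∈ R, FreeGroup.lift f r = 1 := by
  refine ⟨fun ⟨ψ, hψ⟩ r hr => ?_, fun h => ⟨toGroup h, fun _ => toGroup.of h⟩⟩
  have hcomp : ψ.comp (mk R) = FreeGroup.lift f := FreeGroup.ext_hom _ _ (by simpa using hψ)
  rw [← hcomp, MonoidHom.comp_apply, one_of_mem hr, map_one]

theorem mk_lift (R : Set (FreeGroup α)) (w : α → FreeGroup α) (x : FreeGroup α) :
    mk R (FreeGroup.lift w x) = FreeGroup.lift (fun a => mk R (w a)) x :=
  FreeGroup.lift_unique ((mk R).comp (FreeGroup.lift w)) (by simp)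

section AddRelators

variable (R T : Set (FreeGroup α))

def toUnion : PresentedGroup R →* PresentedGroup (R ∪ T) :=
  PresentedGroup.map (MonoidHom.id _) fun _ hr => Or.inl hr

@[simp]
theorem toUnion_mk (x : FreeGroup α) : toUnion R T (mk R x) = mk (R ∪ T) x :=
  rfl

theorem toUnion_surjective : Function.Surjective (toUnion R T) := by
  intro y
  obtain ⟨x, rfl⟩ := mk_surjective _ y
  exact ⟨mk R x, rfl⟩

theorem toUnion_injective_iff :
    Function.Injective (toUnion R T) ↔ ∀ t ∈ T, mk R t = 1 := by
  refine ⟨fun hinj t ht => hinj ?_, fun h => ?_⟩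
  · rw [toUnion_mk, map_one]
    exact one_of_mem (Or.inr ht)
  rw [injective_iff_map_eq_one]
  intro x hx
  obtain ⟨x, rfl⟩ := mk_surjective _ x
  rw [toUnion_mk, mk_eq_one_iff] at hx
  rw [mk_eq_one_iff]
  refine Subgroup.normalClosure_le_normal ?_ hx
  rintro s (hs | hs)
  · exact Subgroup.subset_normalClosure hs
  · exact mk_eq_one_iff.mp (h s hs)

theorem card_eq_card_union_iff [Finite (PresentedGroup R)] :
    Nat.card (PresentedGroup R) = Nat.card (PresentedGroup (R ∪ T)) ↔
      ∀ t ∈ T, mk R t = 1 := by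
  rw [← toUnion_injective_iff]
  refine ⟨fun hcard => ?_, fun hinj => ?_⟩
  · exact ((Nat.bijective_iff_surjective_and_card _).mpr
      ⟨toUnion_surjective R T, hcard⟩).injective
  · exact Nat.card_congr (Equiv.ofBijective _ ⟨hinj, toUnion_surjective R T⟩)

end AddRelators

end PresentedGroup

/-- STATEMENT 17: for a finite presented group `Γ = PresentedGroup R` and a
substitution `w : α → FreeGroup α` with induced endomorphism
`φ = FreeGroup.lift w` of the free group, a homomorphism `ψ : Γ → Γ` with
`ψ ⟦of a⟧ = ⟦w a⟧` exists if and only if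
`Nat.card Γ = Nat.card (PresentedGroup (R ∪ φ '' R))`; moreover such a `ψ` is
unique. -/
theorem statement17 {α : Type*} (R : Set (FreeGroup α))
    (hfin : Finite (PresentedGroup R)) (w : α → FreeGroup α) :
    ((∃ ψ : PresentedGroup R →* PresentedGroup R,
        ∀ a : α, ψ (PresentedGroup.mk R (FreeGroup.of a)) = PresentedGroup.mk R (w a)) ↔
      Nat.card (PresentedGroup R) =
        Nat.card (PresentedGroup (R ∪ ⇑(FreeGroup.lift w) '' R))) ∧
    (∀ ψ₁ ψ₂ : PresentedGroup R →* PresentedGroup R,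
      (∀ a : α, ψ₁ (PresentedGroup.mk R (FreeGroup.of a)) = PresentedGroup.mk R (w a)) →
      (∀ a : α, ψ₂ (PresentedGroup.mk R (FreeGroup.of a)) = PresentedGroup.mk R (w a)) →
      ψ₁ = ψ₂) := by
  refine ⟨?_, fun ψ₁ ψ₂ h₁ h₂ => PresentedGroup.ext fun a => (h₁ a).trans (h₂ a).symm⟩
  rw [PresentedGroup.exists_hom_iff, PresentedGroup.card_eq_card_union_iff,
    Set.forall_mem_image]
  simp only [PresentedGroup.mk_lift]
end
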